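/- arXiv:2605.01843 — 11 statements merged into one kernel-verified Lean document; each statement's English description precedes it below -/
import Mathlib

section
/- If R is collusive and surjective, then the induced protection relation is collusive. -/
theorem stmt_2 {X : Type*} (R : X → X → Prop)
    (hcol : ∀ x y z w, R x y → R x z → R w y → R w z)
    (hsurj : ∀ x, ∃ y, R y x) :
    ∀ x y z w, (∀ u, R u y → R x u) → (∀ u, R u z → R x u) →
      (∀ u, R u y → R w u) → (∀ u, R u z → R w u) := by
  intro x y z w hxy hxz hwy u hu
  obtain ⟨v, hv⟩ := hsurj y
  exact hcol x v u w (hxy v hv) (hxz u hu) (hwy v hv)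
end

section
/- If R is a co-confluent collusion, then the induced protection relation is a collusion (i.e., collusive, total, and surjective). -/
theorem stmt_3 {X : Type*} (R : X → X → Prop)
    (hco : ∀ x y z w, R x y → R z x → R w y → R z w)
    (hcol : ∀ x y z w, R x y → R x z → R w y → R w z)
    (htot : ∀ x, ∃ y, R x y)
    (hsurj : ∀ x, ∃ y, R y x) :
    (∀ x y z w, (∀ u, R u y → R x u) → (∀ u, R u z → R x u) →
      (∀ u, R u y → R w u) → (∀ u, R u z → R w u)) ∧
    (∀ x, ∃ z, ∀ u, R u z → R x u) ∧
    (∀ z, ∃ x, ∀ u, R u z → R x u) := by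
  refine ⟨?_, ?_, ?_⟩
  · intro x y z w hx hxz hw u huz
    obtain ⟨v, hvy⟩ := hsurj y
    exact hcol x v u w (hx v hvy) (hxz u huz) (hw v hvy)
  · intro x
    obtain ⟨y, hxy⟩ := htot x
    obtain ⟨z, hyz⟩ := htot y
    exact ⟨z, fun u huz => hco y z x u hyz hxy huz⟩
  · intro z
    obtain ⟨u0, hu0⟩ := hsurj z
    obtain ⟨x, hx⟩ := hsurj u0
    exact ⟨x, fun u huz => hco u0 z x u hu0 hx huz⟩
end

section
/- If R is anti-transitive, then the induced protection relation is consistent. -/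
theorem stmt_8 {X : Type*} (R : X → X → Prop)
    (hat : ∀ x y z, R x y → R y z → ¬ R x z) :
    ∀ x y, (∀ u, R u y → R x u) → ¬ R x y := by
  intro x y h hxy
  have hxx : R x x := h x hxy
  exact hat x x x hxx hxx hxx
end

section
/- If R is an irreflexive collusion, then any two elements y, y' lying in the same targeting class [x]_R = {w : x R w} satisfy ¬ y R y'. -/
theorem stmt_10 {X : Type*} (R : X → X → Prop)
    (hcol : ∀ x y z w, R x y → R x z → R w y → R w z)
    (htot : ∀ x, ∃ y, R x y)
    (hsurj : ∀ x, ∃ y, R y x)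
    (hirr : ∀ x, ¬ R x x) :
    ∀ x y y', R x y → R x y' → ¬ R y y' := by
  intro x y y' h1 h2 h3
  exact hirr y (hcol x y' y y h2 h1 h3)
end

section
/- If R is an irreflexive collusion, then the family of targeting classes {[x]_R : x ∈ X} forms a partition of X: every element of X belongs to some class, every class is nonempty, and any two classes are either equal or disjoint. -/
theorem stmt_11 {X : Type*} (R : X → X → Prop)
    (hcol : ∀ x y z w, R x y → R x z → R w y → R w z)
    (htot : ∀ x, ∃ y, R x y)
    (hsurj : ∀ x, ∃ y, R y x)
    (hirr : ∀ x, ¬ R x x) :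
    (∀ y : X, ∃ x : X, y ∈ {w | R x w}) ∧
    (∀ x : X, ({w | R x w} : Set X).Nonempty) ∧
    (∀ x x' : X, {w | R x w} = {w | R x' w} ∨
      Disjoint ({w | R x w} : Set X) {w | R x' w}) := by
  refine ⟨hsurj, htot, fun x x' => ?_⟩
  by_cases h : ∃ w, R x w ∧ R x' w
  · obtain ⟨w, hw, hw'⟩ := h
    left
    ext v
    exact ⟨fun hv => hcol x w v x' hw hv hw', fun hv => hcol x' w v x hw' hv hw⟩
  · right
    rw [Set.disjoint_left]
    intro v hv hv'
    exact h ⟨v, hv, hv'⟩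
end

section
/- If R is a symmetric irreflexive collusive relation, then R admits no cycle of odd length: there is no sequence x₀, x₁, ..., x_{2n+1} with x₀ = x_{2n+1}, consecutive elements R-related. -/
/-!
In a symmetric collusive relation a path `a R b R c R d` of length three can be shortened to
`a R d`. Hence the endpoints of every walk of odd length are related, and a closed walk of odd
length would give `x R x`, contradicting irreflexivity.
-/

def Collusive {X : Type*} (R : X → X → Prop) : Prop :=
  ∀ x y z w, R x y → R x z → R w y → R w z

theorem Collusive.rel_of_path_three {X : Type*} {R : X → X → Prop}
    (hcol : Collusive R) (hsym : ∀ x y, R x y → R y x) {a b c d : X}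
    (hab : R a b) (hbc : R b c) (hcd : R c d) : R a d :=
  hsym _ _ (hcol b c a d hbc (hsym _ _ hab) (hsym _ _ hcd))

theorem Collusive.rel_zero_odd_of_walk {X : Type*} {R : X → X → Prop}
    (hcol : Collusive R) (hsym : ∀ x y, R x y → R y x) {m : ℕ} (c : Fin (m + 1) → X)
    (hc : ∀ i : Fin m, R (c i.castSucc) (c i.succ)) :
    ∀ (k : ℕ) (hk : 2 * k + 1 ≤ m), R (c 0) (c ⟨2 * k + 1, by omega⟩)
  | 0, hk => hc ⟨0, hk⟩
  | k + 1, hk =>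
    hcol.rel_of_path_three hsym (rel_zero_odd_of_walk hcol hsym c hc k (by omega))
      (hc ⟨2 * k + 1, by omega⟩) (hc ⟨2 * k + 2, by omega⟩)

theorem stmt_13 {X : Type*} (R : X → X → Prop)
    (hsym : ∀ x y, R x y → R y x)
    (hirr : ∀ x, ¬ R x x)
    (hcol : ∀ x y z w, R x y → R x z → R w y → R w z) :
    ∀ n : ℕ, ¬ ∃ c : Fin (2 * n + 1 + 1) → X,
      c 0 = c (Fin.last (2 * n + 1)) ∧
      ∀ i : Fin (2 * n + 1), R (c i.castSucc) (c i.succ) := by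
  rintro n ⟨c, hclosed, hwalk⟩
  have hlast : R (c 0) (c (Fin.last (2 * n + 1))) :=
    Collusive.rel_zero_odd_of_walk hcol hsym c hwalk n le_rfl
  exact hirr (c 0) (hclosed ▸ hlast)
end

section
/- If R is a symmetric, irreflexive, collusive relation on X, then the structure ⟨X, ∼, R⟩, where x ∼ y iff ∀ z, (z R x ↔ z R y), satisfies: ∼ is an equivalence relation, ∼ and R are non-overlapping, and no balance-violating triads exist, i.e. for all x, y, z: ¬(x R y ∧ y R z ∧ z R x) and ¬(x ∼ y ∧ y ∼ z ∧ x R z). -/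
theorem stmt_14 {X : Type*} (R : X → X → Prop)
    (hsym : ∀ x y, R x y → R y x)
    (hirr : ∀ x, ¬ R x x)
    (hcol : ∀ x y z w, R x y → R x z → R w y → R w z) :
    Equivalence (fun x y => ∀ z, R z x ↔ R z y) ∧
    (∀ x y, ¬ ((∀ z, R z x ↔ R z y) ∧ R x y)) ∧
    (∀ x y z, ¬ (R x y ∧ R y z ∧ R z x)) ∧
    (∀ x y z, ¬ ((∀ w, R w x ↔ R w y) ∧ (∀ w, R w y ↔ R w z) ∧ R x z)) := by
  refine ⟨⟨fun x z => Iff.rfl, fun h z => (h z).symm,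
      fun h1 h2 z => (h1 z).trans (h2 z)⟩, ?_, ?_, ?_⟩
  · rintro x y ⟨h, hxy⟩
    exact hirr x ((h x).mpr hxy)
  · rintro x y z ⟨hxy, hyz, hzx⟩
    exact hirr z (hcol x y z z hxy (hsym z x hzx) (hsym y z hyz))
  · rintro x y z ⟨hxy, hyz, hxz⟩
    exact hirr x ((hxy x).mpr ((hyz x).mpr hxz))
end

section
/- Let ⟨X, R⁺, R⁻⟩ be a collectively connected symmetric signed frame admitting a bi-partition S₁, S₂ of X such that R⁺-related elements are in the same block and R⁻-related elements are in different blocks. Then both R⁺ and R⁻ are collusive. -/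
set_option maxHeartbeats 2000000


theorem stmt_15 {X : Type*} (Rp Rm : X → X → Prop)
    (hrefl : ∀ x, Rp x x) (hsymp : ∀ x y, Rp x y → Rp y x)
    (hsymm : ∀ x y, Rm x y → Rm y x)
    (hnover : ∀ x y, ¬ (Rp x y ∧ Rm x y))
    (hcc : ∀ x y, Rp x y ∨ Rm x y)
    (S₁ S₂ : Set X)
    (hpart : ∀ x : X, (x ∈ S₁ ∨ x ∈ S₂) ∧ ¬ (x ∈ S₁ ∧ x ∈ S₂))
    (hpos : ∀ x y, Rp x y → ((x ∈ S₁ ∧ y ∈ S₁) ∨ (x ∈ S₂ ∧ y ∈ S₂)))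
    (hneg : ∀ x y, Rm x y → ((x ∈ S₁ ∧ y ∈ S₂) ∨ (x ∈ S₂ ∧ y ∈ S₁))) :
    (∀ x y z w, Rp x y → Rp x z → Rp w y → Rp w z) ∧
    (∀ x y z w, Rm x y → Rm x z → Rm w y → Rm w z) := by
  constructor
  · intro x y z w hxy hxz hwy
    rcases hcc w z with h | h
    · exact h
    · exfalso
      have h1 := hpos x y hxy
      have h2 := hpos x z hxz
      have h3 := hpos w y hwy
      have h4 := hneg w z h
      have := hpart x; have := hpart y; have := hpart z; have := hpart w
      tauto
  · intro x y z w hxy hxz hwy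
    rcases hcc w z with h | h
    · exfalso
      have h1 := hneg x y hxy
      have h2 := hneg x z hxz
      have h3 := hneg w y hwy
      have h4 := hpos w z h
      have := hpart x; have := hpart y; have := hpart z; have := hpart w
      tauto
    · exact h
end

section
/- Let ⟨X, R⁺, R⁻⟩ be a collectively connected symmetric signed frame in which both R⁺ and R⁻ are collusive. Then the local balance property holds: for all x, y, z, (x R⁺ y ∧ y R⁺ z) → x R⁺ z, (x R⁻ y ∧ y R⁻ z) → x R⁺ z, (x R⁺ y ∧ y R⁻ z) → x R⁻ z, and (x R⁻ y ∧ y R⁺ z) → x R⁻ z. -/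
theorem stmt_16 {X : Type*} (Rp Rm : X → X → Prop)
    (hrefl : ∀ x, Rp x x) (hsymp : ∀ x y, Rp x y → Rp y x)
    (hsymm : ∀ x y, Rm x y → Rm y x)
    (hnover : ∀ x y, ¬ (Rp x y ∧ Rm x y))
    (hcc : ∀ x y, Rp x y ∨ Rm x y)
    (hcolp : ∀ x y z w, Rp x y → Rp x z → Rp w y → Rp w z)
    (hcolm : ∀ x y z w, Rm x y → Rm x z → Rm w y → Rm w z) :
    ∀ x y z, (Rp x y → Rp y z → Rp x z) ∧
             (Rm x y → Rm y z → Rp x z) ∧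
             (Rp x y → Rm y z → Rm x z) ∧
             (Rm x y → Rp y z → Rm x z) := by
  intro x y z
  refine ⟨fun h1 h2 => hcolp y x z x (hsymp x y h1) h2 (hrefl x), ?_, ?_, ?_⟩
  · intro h1 h2
    rcases hcc x z with h | h
    · exact h
    · exact absurd ⟨hrefl z, hcolm x y z z h1 h (hsymm y z h2)⟩ (hnover z z)
  · intro h1 h2
    rcases hcc x z with h | h
    · exact absurd ⟨hcolp x y z y h1 h (hrefl y), h2⟩ (hnover y z)
    · exact h
  · intro h1 h2
    rcases hcc x z with h | h
    · exact absurd ⟨hsymp y x (hcolp z y x y (hsymp y z h2) (hsymp x z h) (hrefl y)), h1⟩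
        (hnover x y)
    · exact h
end

section
/- Let ⟨X, R⁺, R⁻⟩ be a collectively connected symmetric signed frame in which R⁺ is collusive. Then the local weak balance property holds: for all x, y, z, (x R⁺ y ∧ y R⁺ z) → x R⁺ z, (x R⁺ y ∧ y R⁻ z) → x R⁻ z, and (x R⁻ y ∧ y R⁺ z) → x R⁻ z. -/
theorem stmt_17 {X : Type*} (Rp Rm : X → X → Prop)
    (hrefl : ∀ x, Rp x x) (hsymp : ∀ x y, Rp x y → Rp y x)
    (hsymm : ∀ x y, Rm x y → Rm y x)
    (hnover : ∀ x y, ¬ (Rp x y ∧ Rm x y))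
    (hcc : ∀ x y, Rp x y ∨ Rm x y)
    (hcolp : ∀ x y z w, Rp x y → Rp x z → Rp w y → Rp w z) :
    ∀ x y z, (Rp x y → Rp y z → Rp x z) ∧
             (Rp x y → Rm y z → Rm x z) ∧
             (Rm x y → Rp y z → Rm x z) := by
  have trans : ∀ x y z, Rp x y → Rp y z → Rp x z := fun x y z hxy hyz =>
    hcolp y y z x (hrefl y) hyz hxy
  intro x y z
  refine ⟨trans x y z, fun hxy hyz => ?_, fun hxy hyz => ?_⟩
  · rcases hcc x z with h | h
    · exact absurd ⟨trans y x z (hsymp x y hxy) h, hyz⟩ (hnover y z)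
    · exact h
  · rcases hcc x z with h | h
    · exact absurd ⟨trans x z y h (hsymp y z hyz), hxy⟩ (hnover x y)
    · exact h
end

section
/- A frame ⟨X, R⟩ validates the modal axiom ◇◇⁻□A → □A (i.e., for every valuation V and world x, if there exist y, z with x R y, z R y, and all R-successors of z satisfy A, then all R-successors of x satisfy A) if and only if R is collusive. -/
theorem stmt_18 {X : Type*} (R : X → X → Prop) :
    (∀ (A : X → Prop) (x : X),
        (∃ y, R x y ∧ ∃ z, R z y ∧ ∀ w, R z w → A w) →
        (∀ w, R x w → A w)) ↔
    (∀ x y z w, R x y → R x z → R w y → R w z) := by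
  constructor
  · intro h x y z w hxy hxz hwy
    exact h (R w) x ⟨y, hxy, w, hwy, fun _ h => h⟩ z hxz
  · intro h A x ⟨y, hxy, z, hzy, hA⟩ w hxw
    exact hA w (h x y w z hxy hxw hzy)
end
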